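/- If there are more than (s−1)·log₂(n) primes below a bound B, then for any s distinct integers x_1,...,x_s in [1,n] and any index i, there exists a prime p < B with x_i ≢ x_j (mod p) for all j ≠ i. -/

import Mathlib

/-! Every prime `p < B` that fails for index `i` divides one of the `s - 1` nonzero differences
`x i - x j`, each of absolute value less than `n`. A positive integer `d` has at most `log₂ d`
distinct prime factors, since each is at least `2`. So at most `(s - 1) log₂ n` primes are bad,
and the hypothesis leaves a good one. -/

open Finset

theorem Nat.two_pow_card_primeFactors_le {d : ℕ} (hd : d ≠ 0) : 2 ^ d.primeFactors.card ≤ d :=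
  calc 2 ^ d.primeFactors.card ≤ ∏ p ∈ d.primeFactors, p :=
        pow_card_le_prod _ _ _ fun _ hp => (Nat.prime_of_mem_primeFactors hp).two_le
    _ ≤ d := Nat.le_of_dvd (Nat.pos_of_ne_zero hd) (Nat.prod_primeFactors_dvd d)

theorem Nat.card_primeFactors_le_logb {d : ℕ} {m : ℝ} (hd : d ≠ 0) (hdm : (d : ℝ) ≤ m) :
    (d.primeFactors.card : ℝ) ≤ Real.logb 2 m := by
  have hd_pos : (0 : ℝ) < d := by exact_mod_cast Nat.pos_of_ne_zero hd
  rw [Real.le_logb_iff_rpow_le one_lt_two (hd_pos.trans_le hdm), Real.rpow_natCast]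
  calc (2 : ℝ) ^ d.primeFactors.card ≤ d := by
        exact_mod_cast Nat.two_pow_card_primeFactors_le hd
    _ ≤ m := hdm

section BadPrimes

variable {ι : Type*} [Fintype ι] [DecidableEq ι]

def badPrimes (x : ι → ℤ) (i : ι) : Finset ℕ :=
  (univ.erase i).biUnion fun j => (x i - x j).natAbs.primeFactors

theorem mem_badPrimes_of_modEq {x : ι → ℤ} (hx : Function.Injective x) {i j : ι}
    (hji : j ≠ i) {p : ℕ} (hp : p.Prime) (hmod : x i ≡ x j [ZMOD p]) :
    p ∈ badPrimes x i := by
  have hne : x i - x j ≠ 0 := sub_ne_zero.mpr fun h => hji (hx h.symm)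
  refine mem_biUnion.mpr ⟨j, mem_erase.mpr ⟨hji, mem_univ j⟩, ?_⟩
  refine Nat.mem_primeFactors.mpr ⟨hp, ?_, Int.natAbs_ne_zero.mpr hne⟩
  exact Int.natCast_dvd.mp (dvd_sub_comm.mp (Int.ModEq.dvd hmod))

theorem card_badPrimes_le {x : ι → ℤ} (hx : Function.Injective x) (i : ι) {m : ℝ}
    (hm : ∀ j, (|x i - x j| : ℝ) ≤ m) :
    ((badPrimes x i).card : ℝ) ≤ ((Fintype.card ι : ℝ) - 1) * Real.logb 2 m := by
  have hfactors : ∀ j ∈ univ.erase i,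
      ((x i - x j).natAbs.primeFactors.card : ℝ) ≤ Real.logb 2 m := by
    intro j hj
    refine Nat.card_primeFactors_le_logb ?_ ?_
    · exact Int.natAbs_ne_zero.mpr (sub_ne_zero.mpr fun h => ne_of_mem_erase hj (hx h.symm))
    · simpa [Nat.cast_natAbs] using hm j
  calc ((badPrimes x i).card : ℝ)
      ≤ ∑ j ∈ univ.erase i, ((x i - x j).natAbs.primeFactors.card : ℝ) := by
        exact_mod_cast card_biUnion_le
    _ ≤ ∑ _j ∈ univ.erase i, Real.logb 2 m := sum_le_sum hfactors
    _ = ((Fintype.card ι : ℝ) - 1) * Real.logb 2 m := by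
        rw [sum_const, card_erase_of_mem (mem_univ i), card_univ, nsmul_eq_mul,
          Nat.cast_sub (Fintype.card_pos_iff.mpr ⟨i⟩)]
        push_cast
        ring

end BadPrimes

theorem good_prime_below_bound_general (s n : ℕ) (B : ℝ)
    (hB : ((s : ℝ) - 1) * Real.logb 2 n < ({p : ℕ | p.Prime ∧ (p : ℝ) < B}).ncard)
    (x : Fin s → ℤ) (hinj : Function.Injective x)
    (hrange : ∀ k, 1 ≤ x k ∧ x k ≤ (n : ℤ)) (i : Fin s) :
    ∃ p : ℕ, p.Prime ∧ (p : ℝ) < B ∧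
      ∀ j : Fin s, j ≠ i → ¬ (x i ≡ x j [ZMOD (p : ℤ)]) := by
  have hdiff : ∀ j, (|x i - x j| : ℝ) ≤ n := by
    intro j
    have := hrange i
    have := hrange j
    exact_mod_cast abs_sub_le_iff.mpr ⟨by omega, by omega⟩
  have hcard := card_badPrimes_le hinj i hdiff
  rw [Fintype.card_fin] at hcard
  have hfew : (badPrimes x i : Set ℕ).ncard < {p : ℕ | p.Prime ∧ (p : ℝ) < B}.ncard := by
    rw [Set.ncard_coe_finset]
    exact_mod_cast hcard.trans_lt hB
  obtain ⟨p, ⟨hp, hpB⟩, hpgood⟩ := Set.exists_mem_notMem_of_ncard_lt_ncard hfew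
  exact ⟨p, hp, hpB, fun j hji hmod => hpgood (mem_badPrimes_of_modEq hinj hji hp hmod)⟩

theorem good_prime_below_bound (s n : ℕ) (hs : 2 ≤ s) (hn : 2 ≤ n) (B : ℝ)
    (hB : ((s : ℝ) - 1) * Real.logb 2 n < ({p : ℕ | p.Prime ∧ (p : ℝ) < B}).ncard)
    (x : Fin s → ℤ) (hinj : Function.Injective x)
    (hrange : ∀ k, 1 ≤ x k ∧ x k ≤ (n : ℤ)) (i : Fin s) :
    ∃ p : ℕ, p.Prime ∧ (p : ℝ) < B ∧
      ∀ j : Fin s, j ≠ i → ¬ (x i ≡ x j [ZMOD (p : ℤ)]) :=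
  good_prime_below_bound_general s n B hB x hinj hrange i
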